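/- arXiv:1910.10028 — 6 statements merged into one kernel-verified Lean document; each statement's English description precedes it below -/
import Mathlib

section
/- Let U ⊆ ℝ² be open and let Γ_{ij}{}^k be smooth Christoffel symbols on U (torsion allowed). If the Ricci tensor is parallel, i.e. ρ_{jk;i} = 0 on U for all i,j,k ∈ {1,2}, then the Ricci tensor is symmetric: ρ_{12}(p) = ρ_{21}(p) for every p ∈ U. -/
noncomputable section

open scoped BigOperators

/-- The standard coordinate directions in `ℝ × ℝ`. -/
def coordVec : Fin 2 → ℝ × ℝ := ![(1, 0), (0, 1)]

/-- Partial derivative `∂_i f` of `f : ℝ × ℝ → ℝ`. -/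
noncomputable def pder (i : Fin 2) (f : ℝ × ℝ → ℝ) (p : ℝ × ℝ) : ℝ :=
  fderiv ℝ f p (coordVec i)

/-- Curvature tensor `R_{ijk}{}^l` of the connection with Christoffel symbols `Γ`. -/
noncomputable def affCurv (Γ : Fin 2 → Fin 2 → Fin 2 → ℝ × ℝ → ℝ)
    (i j k l : Fin 2) (p : ℝ × ℝ) : ℝ :=
  pder i (Γ j k l) p - pder j (Γ i k l) p +
    ∑ m : Fin 2, (Γ i m l p * Γ j k m p - Γ j m l p * Γ i k m p)

/-- Ricci tensor `ρ_{jk} = R_{1jk}{}^1 + R_{2jk}{}^2`. -/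
noncomputable def affRicci (Γ : Fin 2 → Fin 2 → Fin 2 → ℝ × ℝ → ℝ)
    (j k : Fin 2) (p : ℝ × ℝ) : ℝ :=
  affCurv Γ 0 j k 0 p + affCurv Γ 1 j k 1 p

/-- Covariant derivative of the Ricci tensor,
`ρ_{jk;i} = ∂_i ρ_{jk} − Σ_m (Γ_{ij}{}^m ρ_{mk} + Γ_{ik}{}^m ρ_{jm})`. -/
noncomputable def affRicciCov (Γ : Fin 2 → Fin 2 → Fin 2 → ℝ × ℝ → ℝ)
    (i j k : Fin 2) (p : ℝ × ℝ) : ℝ :=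
  pder i (affRicci Γ j k) p -
    ∑ m : Fin 2, (Γ i j m p * affRicci Γ m k p + Γ i k m p * affRicci Γ j m p)

/-- Torsion components `T^k = (1/2)(Γ_{12}{}^k − Γ_{21}{}^k)`. -/
noncomputable def affTor (Γ : Fin 2 → Fin 2 → Fin 2 → ℝ × ℝ → ℝ)
    (k : Fin 2) (p : ℝ × ℝ) : ℝ :=
  (1 / 2) * (Γ 0 1 k p - Γ 1 0 k p)

/-- Covariant derivative of the torsion tensor,
`T^k{}_{;i} = ∂_i T^k + Σ_m Γ_{im}{}^k T^m − (Γ_{i1}{}^1 + Γ_{i2}{}^2) T^k`. -/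
noncomputable def affTorCov (Γ : Fin 2 → Fin 2 → Fin 2 → ℝ × ℝ → ℝ)
    (i k : Fin 2) (p : ℝ × ℝ) : ℝ :=
  pder i (affTor Γ k) p + (∑ m : Fin 2, Γ i m k p * affTor Γ m p)
    - (Γ i 0 0 p + Γ i 1 1 p) * affTor Γ k p

open scoped ContDiff

/-- Smoothness of a partial derivative of a smooth function on an open set. -/
private lemma contDiffOn_pder {U : Set (ℝ × ℝ)} (hU : IsOpen U) {f : ℝ × ℝ → ℝ}
    (hf : ContDiffOn ℝ ∞ f U) (i : Fin 2) : ContDiffOn ℝ ∞ (pder i f) U := by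
  have h : ContDiffOn ℝ ∞ (fderiv ℝ f) U := hf.fderiv_of_isOpen hU (by simp)
  exact h.clm_apply contDiffOn_const

/-- If the Ricci tensor of a smooth affine connection (with torsion allowed)
on an open set `U ⊆ ℝ²` is parallel, then the Ricci tensor is symmetric on `U`. -/
theorem ricci_symm_of_parallel (U : Set (ℝ × ℝ)) (hU : IsOpen U)
    (Γ : Fin 2 → Fin 2 → Fin 2 → ℝ × ℝ → ℝ)
    (hΓ : ∀ i j k, ContDiffOn ℝ (⊤ : ℕ∞) (Γ i j k) U)
    (hpar : ∀ i j k, ∀ p ∈ U, affRicciCov Γ i j k p = 0) :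
    ∀ p ∈ U, affRicci Γ 0 1 p = affRicci Γ 1 0 p := by
  have hΓ' : ∀ i j k, ContDiffOn ℝ ∞ (Γ i j k) U := fun i j k => (hΓ i j k).of_le (by simp)
  have hpd : ∀ a i j k, ContDiffOn ℝ ∞ (pder a (Γ i j k)) U :=
    fun a i j k => contDiffOn_pder hU (hΓ' i j k) a
  -- smoothness of the curvature and Ricci tensors
  have hcurv : ∀ i j k l, ContDiffOn ℝ ∞ (affCurv Γ i j k l) U := by
    intro i j k l
    have he : affCurv Γ i j k l = fun p =>
        pder i (Γ j k l) p - pder j (Γ i k l) p +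
          ((Γ i 0 l p * Γ j k 0 p - Γ j 0 l p * Γ i k 0 p) +
           (Γ i 1 l p * Γ j k 1 p - Γ j 1 l p * Γ i k 1 p)) := by
      funext p; simp [affCurv, Fin.sum_univ_two]; ring
    rw [he]
    exact ((hpd i j k l).sub (hpd j i k l)).add
      ((((hΓ' i 0 l).mul (hΓ' j k 0)).sub ((hΓ' j 0 l).mul (hΓ' i k 0))).add
       (((hΓ' i 1 l).mul (hΓ' j k 1)).sub ((hΓ' j 1 l).mul (hΓ' i k 1))))
  have hρ : ∀ j k, ContDiffOn ℝ ∞ (affRicci Γ j k) U := by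
    intro j k
    have he : affRicci Γ j k = fun p => affCurv Γ 0 j k 0 p + affCurv Γ 1 j k 1 p := rfl
    rw [he]
    exact (hcurv 0 j k 0).add (hcurv 1 j k 1)
  -- the antisymmetric part of the Ricci tensor
  set A : ℝ × ℝ → ℝ := fun q => affRicci Γ 0 1 q - affRicci Γ 1 0 q with hAdef
  have hA : ContDiffOn ℝ ∞ A U := (hρ 0 1).sub (hρ 1 0)
  -- differentiability helpers
  have dAt : ∀ {f : ℝ × ℝ → ℝ}, ContDiffOn ℝ ∞ f U → ∀ {q}, q ∈ U →
      DifferentiableAt ℝ f q := by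
    intro f hf q hq
    exact (hf.differentiableOn (by norm_num)).differentiableAt (hU.mem_nhds hq)
  -- the trace one-form
  set c : Fin 2 → ℝ × ℝ → ℝ := fun i q => Γ i 0 0 q + Γ i 1 1 q with hcdef
  have hc : ∀ i, ContDiffOn ℝ ∞ (c i) U := fun i => (hΓ' i 0 0).add (hΓ' i 1 1)
  -- from the parallel hypothesis: ∂_i A = c_i A on U
  have hdA : ∀ i : Fin 2, ∀ q ∈ U, pder i A q = c i q * A q := by
    intro i q hq
    have h1 := hpar i 0 1 q hq
    have h2 := hpar i 1 0 q hq
    simp only [affRicciCov, Fin.sum_univ_two, sub_eq_zero] at h1 h2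
    have hsub : pder i A q = pder i (affRicci Γ 0 1) q - pder i (affRicci Γ 1 0) q := by
      simp only [pder, hAdef]
      rw [fderiv_fun_sub (dAt (hρ 0 1) hq) (dAt (hρ 1 0) hq)]
      simp
    rw [hsub, h1, h2, hcdef, hAdef]
    ring
  -- the algebraic identity: A = ∂_1 γ_0 - ∂_0 γ_1 (componentwise)
  have idA : ∀ q : ℝ × ℝ, A q =
      pder 1 (Γ 0 0 0) q + pder 1 (Γ 0 1 1) q - (pder 0 (Γ 1 0 0) q + pder 0 (Γ 1 1 1) q) := by
    intro q
    simp only [hAdef, affRicci, affCurv, Fin.sum_univ_two]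
    ring
  intro p hp
  suffices hA0 : A p = 0 by
    have : affRicci Γ 0 1 p - affRicci Γ 1 0 p = 0 := hA0
    linarith
  -- second derivative of A at p and its symmetry
  have hfd : ContDiffOn ℝ ∞ (fderiv ℝ A) U := hA.fderiv_of_isOpen hU (by simp)
  have hdiff'' : DifferentiableAt ℝ (fderiv ℝ A) p :=
    (hfd.differentiableOn (by norm_num)).differentiableAt (hU.mem_nhds hp)
  set f'' := fderiv ℝ (fderiv ℝ A) p with hf''def
  have hsymm : f'' (coordVec 0) (coordVec 1) = f'' (coordVec 1) (coordVec 0) := by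
    apply second_derivative_symmetric_of_eventually (f := A)
    · filter_upwards [hU.mem_nhds hp] with y hy using (dAt hA hy).hasFDerivAt
    · exact hdiff''.hasFDerivAt
  have key : ∀ a b : Fin 2, pder a (pder b A) p = f'' (coordVec a) (coordVec b) := by
    intro a b
    have h1 := hdiff''.hasFDerivAt.clm_apply (hasFDerivAt_const (coordVec b) p)
    simp only [fderiv_const, Pi.zero_apply, ContinuousLinearMap.comp_zero, zero_add] at h1
    have h2 : pder b A = fun q => fderiv ℝ A q (coordVec b) := rfl
    rw [pder, h2, h1.fderiv]
    simp [hf''def]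
  -- compute mixed partials using ∂_b A = c_b A near p
  have hmix : ∀ a b : Fin 2, pder a (pder b A) p
      = pder a (c b) p * A p + c b p * (c a p * A p) := by
    intro a b
    have hEq : pder b A =ᶠ[nhds p] fun q => c b q * A q := by
      filter_upwards [hU.mem_nhds hp] with y hy using hdA b y hy
    have hfe : fderiv ℝ (pder b A) p = fderiv ℝ (fun q => c b q * A q) p := hEq.fderiv_eq
    have hmul := fderiv_fun_mul (dAt (hc b) hp) (dAt hA hp)
    rw [pder, hfe, hmul]
    have hAa : fderiv ℝ A p (coordVec a) = c a p * A p := hdA a p hp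
    simp [pder, hAa]
    ring
  -- Schwarz gives (∂_0 c_1 - ∂_1 c_0) A = 0
  have hschwarz : pder 0 (pder 1 A) p = pder 1 (pder 0 A) p := by
    rw [key 0 1, key 1 0, hsymm]
  rw [hmix 0 1, hmix 1 0] at hschwarz
  have hDA : (pder 0 (c 1) p - pder 1 (c 0) p) * A p = 0 := by linarith [hschwarz]
  -- and ∂_0 c_1 - ∂_1 c_0 = -A
  have hD : pder 0 (c 1) p - pder 1 (c 0) p = -A p := by
    have h01 : pder 0 (c 1) p = pder 0 (Γ 1 0 0) p + pder 0 (Γ 1 1 1) p := by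
      simp only [pder, hcdef]
      rw [fderiv_fun_add (dAt (hΓ' 1 0 0) hp) (dAt (hΓ' 1 1 1) hp)]
      simp
    have h10 : pder 1 (c 0) p = pder 1 (Γ 0 0 0) p + pder 1 (Γ 0 1 1) p := by
      simp only [pder, hcdef]
      rw [fderiv_fun_add (dAt (hΓ' 0 0 0) hp) (dAt (hΓ' 0 1 1) hp)]
      simp
    rw [h01, h10, idA p]
    ring
  rw [hD] at hDA
  have : A p * A p = 0 := by linarith [hDA]
  exact mul_self_eq_zero.mp this
end
end

section
/- Let U ⊆ ℝ² be open with smooth Christoffel symbols Γ_{ij}{}^k, and let S = (S¹,S²) be a parallel abstract torsion tensor on U, i.e. S^k{}_{;i} = 0 on U for all i,k. Then at every point of U the components of S lie in the kernel of the Ricci matrix: ρ_{11} S¹ + ρ_{21} S² = 0 and ρ_{12} S¹ + ρ_{22} S² = 0 on U. -/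
noncomputable section

open scoped BigOperators

/-- Covariant derivative of an abstract torsion tensor `S`,
`S^k{}_{;i} = ∂_i S^k + Σ_m Γ_{im}{}^k S^m − (Γ_{i1}{}^1 + Γ_{i2}{}^2) S^k`. -/
noncomputable def absTorCov (Γ : Fin 2 → Fin 2 → Fin 2 → ℝ × ℝ → ℝ)
    (S : Fin 2 → ℝ × ℝ → ℝ) (i k : Fin 2) (p : ℝ × ℝ) : ℝ :=
  pder i (S k) p + (∑ m : Fin 2, Γ i m k p * S m p)
    - (Γ i 0 0 p + Γ i 1 1 p) * S k p


section Aux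

/-- Auxiliary: the parallel-transport right-hand side `G_{ik}` with
`∂_i S^k = G_{ik}` when `S` is parallel. -/
noncomputable def Gaux (Γ : Fin 2 → Fin 2 → Fin 2 → ℝ × ℝ → ℝ)
    (S : Fin 2 → ℝ × ℝ → ℝ) (i k : Fin 2) (q : ℝ × ℝ) : ℝ :=
  (Γ i 0 0 q + Γ i 1 1 q) * S k q - (Γ i 0 k q * S 0 q + Γ i 1 k q * S 1 q)

lemma pder_congr_nhds {f g : ℝ × ℝ → ℝ} {p : ℝ × ℝ} (h : f =ᶠ[nhds p] g) (i : Fin 2) :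
    pder i f p = pder i g p := by
  unfold pder
  rw [h.fderiv_eq]

lemma pder_pder {f : ℝ × ℝ → ℝ} {p : ℝ × ℝ} (hf : ContDiffAt ℝ 2 f p) (i j : Fin 2) :
    pder i (pder j f) p = fderiv ℝ (fderiv ℝ f) p (coordVec i) (coordVec j) := by
  have hd : DifferentiableAt ℝ (fderiv ℝ f) p :=
    (hf.fderiv_right (m := 1) le_rfl).differentiableAt one_ne_zero
  have H : HasFDerivAt (fun q => (fderiv ℝ f q) (coordVec j))
      ((fderiv ℝ (fderiv ℝ f) p).flip (coordVec j)) p := by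
    have h2 := hd.hasFDerivAt.clm_apply (hasFDerivAt_const (coordVec j) p)
    simpa using h2
  unfold pder
  rw [H.fderiv]
  simp

lemma pder_symm {f : ℝ × ℝ → ℝ} {p : ℝ × ℝ} (hf : ContDiffAt ℝ 2 f p) :
    pder 0 (pder 1 f) p = pder 1 (pder 0 f) p := by
  rw [pder_pder hf, pder_pder hf]
  exact (hf.isSymmSndFDerivAt (by simp [minSmoothness_of_isRCLikeNormedField])).eq _ _

lemma pder_comb {a b c d e f g : ℝ × ℝ → ℝ} {p : ℝ × ℝ} (i : Fin 2)
    (ha : DifferentiableAt ℝ a p) (hb : DifferentiableAt ℝ b p)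
    (hc : DifferentiableAt ℝ c p) (hd : DifferentiableAt ℝ d p)
    (he : DifferentiableAt ℝ e p) (hf : DifferentiableAt ℝ f p)
    (hg : DifferentiableAt ℝ g p) :
    pder i (fun q => (a q + b q) * c q - (d q * e q + f q * g q)) p =
      (pder i a p + pder i b p) * c p + (a p + b p) * pder i c p
        - (pder i d p * e p + d p * pder i e p
            + (pder i f p * g p + f p * pder i g p)) := by
  have H : HasFDerivAt (fun q => (a q + b q) * c q - (d q * e q + f q * g q))
      ((((a p + b p) • fderiv ℝ c p + c p • (fderiv ℝ a p + fderiv ℝ b p))) -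
        ((d p • fderiv ℝ e p + e p • fderiv ℝ d p) +
          (f p • fderiv ℝ g p + g p • fderiv ℝ f p))) p :=
    ((((ha.hasFDerivAt.add hb.hasFDerivAt)).mul hc.hasFDerivAt).sub
      ((hd.hasFDerivAt.mul he.hasFDerivAt).add (hf.hasFDerivAt.mul hg.hasFDerivAt)))
  show fderiv ℝ _ p (coordVec i) = _
  rw [H.fderiv]
  simp only [ContinuousLinearMap.coe_sub', ContinuousLinearMap.coe_add', Pi.sub_apply,
    Pi.add_apply, ContinuousLinearMap.coe_smul', Pi.smul_apply, smul_eq_mul]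
  show _ = (fderiv ℝ a p (coordVec i) + fderiv ℝ b p (coordVec i)) * c p
      + (a p + b p) * fderiv ℝ c p (coordVec i)
      - (fderiv ℝ d p (coordVec i) * e p + d p * fderiv ℝ e p (coordVec i)
          + (fderiv ℝ f p (coordVec i) * g p + f p * fderiv ℝ g p (coordVec i)))
  ring

end Aux

/-- a parallel abstract torsion tensor lies pointwise in the kernel
of the Ricci matrix: `ρ_{11} S¹ + ρ_{21} S² = 0` and `ρ_{12} S¹ + ρ_{22} S² = 0`. -/
theorem parallel_torsion_in_ricci_kernel (U : Set (ℝ × ℝ)) (hU : IsOpen U)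
    (Γ : Fin 2 → Fin 2 → Fin 2 → ℝ × ℝ → ℝ)
    (hΓ : ∀ i j k, ContDiffOn ℝ (⊤ : ℕ∞) (Γ i j k) U)
    (S : Fin 2 → ℝ × ℝ → ℝ) (hS : ∀ k, ContDiffOn ℝ (⊤ : ℕ∞) (S k) U)
    (hpar : ∀ i k, ∀ p ∈ U, absTorCov Γ S i k p = 0) :
    ∀ p ∈ U,
      affRicci Γ 0 0 p * S 0 p + affRicci Γ 1 0 p * S 1 p = 0 ∧
      affRicci Γ 0 1 p * S 0 p + affRicci Γ 1 1 p * S 1 p = 0 := by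
  intro p hp
  have hmem : U ∈ nhds p := hU.mem_nhds hp
  have cΓ : ∀ i j k, ContDiffAt ℝ 2 (Γ i j k) p := fun i j k =>
    ((hΓ i j k).contDiffAt hmem).of_le (by exact WithTop.coe_le_coe.mpr (le_top : (2 : ℕ∞) ≤ ⊤))
  have dΓ : ∀ i j k, DifferentiableAt ℝ (Γ i j k) p := fun i j k =>
    (cΓ i j k).differentiableAt two_ne_zero
  have cS : ∀ k, ContDiffAt ℝ 2 (S k) p := fun k =>
    ((hS k).contDiffAt hmem).of_le (by exact WithTop.coe_le_coe.mpr (le_top : (2 : ℕ∞) ≤ ⊤))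
  have dS : ∀ k, DifferentiableAt ℝ (S k) p :=
    fun k => (cS k).differentiableAt two_ne_zero
  -- on U, the first derivatives of S are given by Gaux
  have hA : ∀ i k, ∀ q ∈ U, pder i (S k) q = Gaux Γ S i k q := by
    intro i k q hq
    have h := hpar i k q hq
    simp only [absTorCov, Fin.sum_univ_two, Gaux] at h ⊢
    linarith
  have hEv : ∀ i k, pder i (S k) =ᶠ[nhds p] Gaux Γ S i k := fun i k =>
    Filter.eventually_of_mem hmem (hA i k)
  have hkey : ∀ k, pder 0 (Gaux Γ S 1 k) p = pder 1 (Gaux Γ S 0 k) p := by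
    intro k
    calc pder 0 (Gaux Γ S 1 k) p = pder 0 (pder 1 (S k)) p :=
          (pder_congr_nhds (hEv 1 k) 0).symm
      _ = pder 1 (pder 0 (S k)) p := pder_symm (cS k)
      _ = pder 1 (Gaux Γ S 0 k) p := pder_congr_nhds (hEv 0 k) 1
  have hG : ∀ i j k, pder i (Gaux Γ S j k) p =
      (pder i (Γ j 0 0) p + pder i (Γ j 1 1) p) * S k p
        + (Γ j 0 0 p + Γ j 1 1 p) * pder i (S k) p
        - (pder i (Γ j 0 k) p * S 0 p + Γ j 0 k p * pder i (S 0) p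
            + (pder i (Γ j 1 k) p * S 1 p + Γ j 1 k p * pder i (S 1) p)) := by
    intro i j k
    have hGfun : Gaux Γ S j k = fun q =>
        (Γ j 0 0 q + Γ j 1 1 q) * S k q - (Γ j 0 k q * S 0 q + Γ j 1 k q * S 1 q) := rfl
    rw [hGfun]
    exact pder_comb i (dΓ j 0 0) (dΓ j 1 1) (dS k) (dΓ j 0 k) (dS 0) (dΓ j 1 k) (dS 1)
  have hkey' : ∀ k, ∀ i₀ i₁ : Fin 2,
      pder i₀ (Gaux Γ S i₁ k) p =
        (pder i₀ (Γ i₁ 0 0) p + pder i₀ (Γ i₁ 1 1) p) * S k p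
          + (Γ i₁ 0 0 p + Γ i₁ 1 1 p) * Gaux Γ S i₀ k p
          - (pder i₀ (Γ i₁ 0 k) p * S 0 p + Γ i₁ 0 k p * Gaux Γ S i₀ 0 p
              + (pder i₀ (Γ i₁ 1 k) p * S 1 p + Γ i₁ 1 k p * Gaux Γ S i₀ 1 p)) := by
    intro k i₀ i₁
    rw [hG i₀ i₁ k, hA i₀ k p hp, hA i₀ 0 p hp, hA i₀ 1 p hp]
  have E : ∀ k : Fin 2,
      (pder 0 (Γ 1 0 0) p + pder 0 (Γ 1 1 1) p) * S k p
          + (Γ 1 0 0 p + Γ 1 1 1 p) * Gaux Γ S 0 k p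
          - (pder 0 (Γ 1 0 k) p * S 0 p + Γ 1 0 k p * Gaux Γ S 0 0 p
              + (pder 0 (Γ 1 1 k) p * S 1 p + Γ 1 1 k p * Gaux Γ S 0 1 p)) =
      (pder 1 (Γ 0 0 0) p + pder 1 (Γ 0 1 1) p) * S k p
          + (Γ 0 0 0 p + Γ 0 1 1 p) * Gaux Γ S 1 k p
          - (pder 1 (Γ 0 0 k) p * S 0 p + Γ 0 0 k p * Gaux Γ S 1 0 p
              + (pder 1 (Γ 0 1 k) p * S 1 p + Γ 0 1 k p * Gaux Γ S 1 1 p)) := by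
    intro k
    rw [← hkey' k 0 1, ← hkey' k 1 0]
    exact hkey k
  have E0 := E 0
  have E1 := E 1
  simp only [Gaux] at E0 E1
  constructor
  · simp only [affRicci, affCurv, Fin.sum_univ_two]
    linear_combination E1
  · simp only [affRicci, affCurv, Fin.sum_univ_two]
    linear_combination -E0
end
end

section
/- Let U ⊆ ℝ² be open and connected with smooth Christoffel symbols Γ_{ij}{}^k, and let 𝔓 denote the real vector space of parallel abstract torsion tensors on U, i.e. pairs of smooth functions S = (S¹,S²) with S^k{}_{;i} = 0 on U for all i,k. Then for every point p ∈ U, rank(ρ_{jk}(p)) + dim_ℝ 𝔓 ≤ 2, where (ρ_{jk}(p)) is the 2×2 Ricci matrix at p. -/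
noncomputable section

open scoped BigOperators

open scoped Topology
open Set Metric

theorem pder_congr {f g : ℝ × ℝ → ℝ} {q : ℝ × ℝ} (i : Fin 2) (h : f =ᶠ[𝓝 q] g) :
    pder i f q = pder i g q := by
  unfold pder; rw [h.fderiv_eq]
theorem pder_add {a b : ℝ × ℝ → ℝ} {q : ℝ × ℝ} (i : Fin 2)
    (ha : DifferentiableAt ℝ a q) (hb : DifferentiableAt ℝ b q) :
    pder i (fun x => a x + b x) q = pder i a q + pder i b q := by
  unfold pder; rw [fderiv_fun_add ha hb]; simp
theorem pder_sub {a b : ℝ × ℝ → ℝ} {q : ℝ × ℝ} (i : Fin 2)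
    (ha : DifferentiableAt ℝ a q) (hb : DifferentiableAt ℝ b q) :
    pder i (fun x => a x - b x) q = pder i a q - pder i b q := by
  unfold pder; rw [fderiv_fun_sub ha hb]; simp
theorem pder_mul {a b : ℝ × ℝ → ℝ} {q : ℝ × ℝ} (i : Fin 2)
    (ha : DifferentiableAt ℝ a q) (hb : DifferentiableAt ℝ b q) :
    pder i (fun x => a x * b x) q = pder i a q * b q + a q * pder i b q := by
  unfold pder; rw [fderiv_fun_mul ha hb]; simp; ring
theorem pder_comm (f : ℝ × ℝ → ℝ) (q : ℝ × ℝ) (hf : ContDiffAt ℝ (⊤ : ℕ∞) f q) :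
    pder 0 (pder 1 f) q = pder 1 (pder 0 f) q := by
  have hsymm := hf.isSymmSndFDerivAt (by rw [minSmoothness_of_isRCLikeNormedField]; exact WithTop.coe_le_coe.2 le_top)
  have key : ∀ i j : Fin 2, pder i (pder j f) q
      = fderiv ℝ (fderiv ℝ f) q (coordVec i) (coordVec j) := by
    intro i j
    have hdf : DifferentiableAt ℝ (fderiv ℝ f) q :=
      (hf.fderiv_right (m := 1) ((by exact WithTop.coe_le_coe.2 le_top))).differentiableAt one_ne_zero
    show fderiv ℝ (fun p => fderiv ℝ f p (coordVec j)) q (coordVec i) = _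
    have : (fun p => fderiv ℝ f p (coordVec j))
        = fun p => (ContinuousLinearMap.apply ℝ ℝ (coordVec j)) (fderiv ℝ f p) := rfl
    rw [this, fderiv_comp' q ((ContinuousLinearMap.apply ℝ ℝ (coordVec j)).differentiableAt) hdf]
    simp
  rw [key 0 1, key 1 0, hsymm]

/-- RHS of the parallel equation. -/
noncomputable def gfun (Γ : Fin 2 → Fin 2 → Fin 2 → ℝ × ℝ → ℝ)
    (S : Fin 2 → ℝ × ℝ → ℝ) (i k : Fin 2) (x : ℝ × ℝ) : ℝ :=
  (Γ i 0 0 x + Γ i 1 1 x) * S k x - (Γ i 0 k x * S 0 x + Γ i 1 k x * S 1 x)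

theorem key_ricci {U : Set (ℝ × ℝ)} (hU : IsOpen U)
    {Γ : Fin 2 → Fin 2 → Fin 2 → ℝ × ℝ → ℝ}
    (hΓ : ∀ i j k, ContDiffOn ℝ (⊤ : ℕ∞) (Γ i j k) U)
    {S : Fin 2 → ℝ × ℝ → ℝ} (hS : ∀ k, ContDiffOn ℝ (⊤ : ℕ∞) (S k) U)
    (hpar : ∀ i k, ∀ q ∈ U, absTorCov Γ S i k q = 0)
    {q : ℝ × ℝ} (hq : q ∈ U) (l : Fin 2) :
    affRicci Γ 0 l q * S 0 q + affRicci Γ 1 l q * S 1 q = 0 := by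
  have hgd : ∀ x ∈ U, ∀ i k, pder i (S k) x = gfun Γ S i k x := by
    intro x hx i k
    have := hpar i k x hx
    simp only [absTorCov, Fin.sum_univ_two, gfun] at this ⊢
    linarith
  have hnq : U ∈ 𝓝 q := hU.mem_nhds hq
  have dΓ : ∀ i j k, DifferentiableAt ℝ (Γ i j k) q := fun i j k =>
    (((hΓ i j k).contDiffAt hnq).differentiableAt (by simp))
  have dS : ∀ k, DifferentiableAt ℝ (S k) q := fun k =>
    (((hS k).contDiffAt hnq).differentiableAt (by simp))
  -- expansion of pder i (gfun Γ S j k) q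
  have ex : ∀ i j k : Fin 2, pder i (gfun Γ S j k) q =
      (pder i (Γ j 0 0) q + pder i (Γ j 1 1) q) * S k q
        + (Γ j 0 0 q + Γ j 1 1 q) * gfun Γ S i k q
      - (pder i (Γ j 0 k) q * S 0 q + Γ j 0 k q * gfun Γ S i 0 q
          + (pder i (Γ j 1 k) q * S 1 q + Γ j 1 k q * gfun Γ S i 1 q)) := by
    intro i j k
    show pder i (fun x => (fun x => (Γ j 0 0 x + Γ j 1 1 x) * S k x) x
        - (fun x => Γ j 0 k x * S 0 x + Γ j 1 k x * S 1 x) x) q = _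
    rw [pder_sub i (((dΓ j 0 0).fun_add (dΓ j 1 1)).fun_mul (dS k))
        (((dΓ j 0 k).fun_mul (dS 0)).fun_add ((dΓ j 1 k).fun_mul (dS 1))),
      pder_mul i ((dΓ j 0 0).fun_add (dΓ j 1 1)) (dS k),
      pder_add i (dΓ j 0 0) (dΓ j 1 1),
      pder_add i ((dΓ j 0 k).fun_mul (dS 0)) ((dΓ j 1 k).fun_mul (dS 1)),
      pder_mul i (dΓ j 0 k) (dS 0), pder_mul i (dΓ j 1 k) (dS 1),
      hgd q hq i k, hgd q hq i 0, hgd q hq i 1]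
  have comm : ∀ k : Fin 2, pder 0 (gfun Γ S 1 k) q = pder 1 (gfun Γ S 0 k) q := by
    intro k
    have e1 : pder 0 (pder 1 (S k)) q = pder 0 (gfun Γ S 1 k) q := by
      apply pder_congr
      filter_upwards [hnq] with x hx using hgd x hx 1 k
    have e2 : pder 1 (pder 0 (S k)) q = pder 1 (gfun Γ S 0 k) q := by
      apply pder_congr
      filter_upwards [hnq] with x hx using hgd x hx 0 k
    rw [← e1, ← e2, pder_comm (S k) q ((hS k).contDiffAt hnq)]
  fin_cases l
  · have H := comm 1
    rw [ex 0 1 1, ex 1 0 1] at H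
    simp only [affRicci, affCurv, Fin.sum_univ_two, gfun, Fin.mk_zero, Fin.mk_one] at H ⊢
    linear_combination H
  · have H := comm 0
    rw [ex 0 1 0, ex 1 0 0] at H
    simp only [affRicci, affCurv, Fin.sum_univ_two, gfun, Fin.mk_zero, Fin.mk_one] at H ⊢
    linear_combination -H

theorem clm_apply_coord (L : (ℝ × ℝ) →L[ℝ] ℝ) (w : ℝ × ℝ) :
    L w = w.1 * L (coordVec 0) + w.2 * L (coordVec 1) := by
  have hw : w = w.1 • coordVec 0 + w.2 • coordVec 1 := by
    simp [coordVec, Prod.ext_iff]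
  conv_lhs => rw [hw]
  rw [map_add, L.map_smul, L.map_smul]
  simp [smul_eq_mul]

theorem parallel_vanish {U : Set (ℝ × ℝ)} (hU : IsOpen U) (hconn : IsConnected U)
    {Γ : Fin 2 → Fin 2 → Fin 2 → ℝ × ℝ → ℝ}
    (hΓ : ∀ i j k, ContDiffOn ℝ (⊤ : ℕ∞) (Γ i j k) U)
    {S : Fin 2 → ℝ × ℝ → ℝ} (hS : ∀ k, ContDiffOn ℝ (⊤ : ℕ∞) (S k) U)
    (hpar : ∀ i k, ∀ q ∈ U, absTorCov Γ S i k q = 0)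
    {p : ℝ × ℝ} (hp : p ∈ U) (h00 : S 0 p = 0) (h10 : S 1 p = 0) :
    ∀ q ∈ U, ∀ k, S k q = 0 := by
  have hgd : ∀ x ∈ U, ∀ i k, pder i (S k) x = gfun Γ S i k x := by
    intro x hx i k
    have := hpar i k x hx
    simp only [absTorCov, Fin.sum_univ_two, gfun] at this ⊢
    linarith
  set Z : Set (ℝ × ℝ) := {x | x ∈ U ∧ S 0 x = 0 ∧ S 1 x = 0} with hZ
  -- Z is open
  have hZopen : IsOpen Z := by
    rw [isOpen_iff_mem_nhds]
    rintro q0 ⟨hq0U, hq00, hq01⟩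
    obtain ⟨ε, hε, hball⟩ := Metric.isOpen_iff.1 hU q0 hq0U
    set r := ε / 2 with hr
    have hrpos : 0 < r := by positivity
    have hcb : closedBall q0 r ⊆ U := fun x hx =>
      hball (lt_of_le_of_lt (mem_closedBall.1 hx) (by linarith))
    -- uniform bound on the Γ's on the closed ball
    have hbd : ∃ C : ℝ, 0 ≤ C ∧ ∀ i j k, ∀ x ∈ closedBall q0 r, |Γ i j k x| ≤ C := by
      have h := fun i j k => (isCompact_closedBall q0 r).exists_bound_of_continuousOn
        ((hΓ i j k).continuousOn.mono hcb)
      choose Cf hCf using h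
      refine ⟨∑ i : Fin 2, ∑ j : Fin 2, ∑ k : Fin 2, |Cf i j k|, ?_, ?_⟩
      · positivity
      · intro i j k x hx
        have h1 : |Γ i j k x| ≤ Cf i j k := by simpa using hCf i j k x hx
        have h2 : Cf i j k ≤ |Cf i j k| := le_abs_self _
        have h3 : |Cf i j k| ≤ ∑ i : Fin 2, ∑ j : Fin 2, ∑ k : Fin 2, |Cf i j k| := by
          fin_cases i <;> fin_cases j <;> fin_cases k <;>
            simp only [Fin.sum_univ_two, Fin.mk_zero, Fin.mk_one] <;>
            linarith [abs_nonneg (Cf 0 0 0), abs_nonneg (Cf 0 0 1), abs_nonneg (Cf 0 1 0),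
              abs_nonneg (Cf 0 1 1), abs_nonneg (Cf 1 0 0), abs_nonneg (Cf 1 0 1),
              abs_nonneg (Cf 1 1 0), abs_nonneg (Cf 1 1 1)]
        linarith
    obtain ⟨C, hC0, hC⟩ := hbd
    -- every point of the open ball is in Z
    have hsub : ball q0 r ⊆ Z := by
      intro q' hq'
      have hq'U : q' ∈ U := hcb (ball_subset_closedBall hq')
      set w : ℝ × ℝ := q' - q0 with hw
      set γ : ℝ → ℝ × ℝ := fun t => q0 + t • w with hγ
      have hγmem : ∀ t ∈ Icc (0:ℝ) 1, γ t ∈ ball q0 r := by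
        intro t ht
        have : dist (γ t) q0 = |t| * ‖w‖ := by
          simp [hγ, dist_eq_norm, norm_smul, abs_of_nonneg ht.1]
        rw [mem_ball, this, abs_of_nonneg ht.1]
        have hwr : ‖w‖ < r := by simpa [hw, dist_eq_norm] using mem_ball.1 hq'
        nlinarith [norm_nonneg w, ht.2]
      set f : ℝ → ℝ × ℝ := fun t => (S 0 (γ t), S 1 (γ t)) with hf
      set f' : ℝ → ℝ × ℝ := fun t =>
        (w.1 * gfun Γ S 0 0 (γ t) + w.2 * gfun Γ S 1 0 (γ t),
         w.1 * gfun Γ S 0 1 (γ t) + w.2 * gfun Γ S 1 1 (γ t)) with hf'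
      have hγd : ∀ t : ℝ, HasDerivAt γ w t := by
        intro t
        simpa [hγ] using ((hasDerivAt_id t).smul_const w).const_add q0
      have hfd : ∀ t ∈ Icc (0:ℝ) 1, HasDerivAt f (f' t) t := by
        intro t ht
        have hmem : γ t ∈ U := hcb (ball_subset_closedBall (hγmem t ht))
        have hdk : ∀ k, HasDerivAt (fun s => S k (γ s)) (fderiv ℝ (S k) (γ t) w) t := by
          intro k
          have hSd : DifferentiableAt ℝ (S k) (γ t) :=
            ((hS k).contDiffAt (hU.mem_nhds hmem)).differentiableAt (by simp)
          exact hSd.hasFDerivAt.comp_hasDerivAt t (hγd t)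
        have hco : ∀ k : Fin 2, fderiv ℝ (S k) (γ t) w
            = w.1 * gfun Γ S 0 k (γ t) + w.2 * gfun Γ S 1 k (γ t) := by
          intro k
          rw [clm_apply_coord (fderiv ℝ (S k) (γ t)) w]
          show w.1 * pder 0 (S k) (γ t) + w.2 * pder 1 (S k) (γ t) = _
          rw [hgd (γ t) hmem 0 k, hgd (γ t) hmem 1 k]
        have h0 := hdk 0; have h1 := hdk 1
        rw [hco 0] at h0; rw [hco 1] at h1
        exact h0.prodMk h1
      -- Gronwall
      set K : ℝ := (|w.1| + |w.2|) * 4 * C with hK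
      have hbound : ∀ t ∈ Ico (0:ℝ) 1, ‖f' t‖ ≤ K * ‖f t‖ + 0 := by
        intro t ht
        have hmem : γ t ∈ closedBall q0 r :=
          ball_subset_closedBall (hγmem t ⟨ht.1, le_of_lt ht.2⟩)
        have hSb : ∀ m : Fin 2, |S m (γ t)| ≤ ‖f t‖ := by
          intro m
          fin_cases m
          · exact le_max_left _ _
          · exact le_max_right _ _
        have hgb : ∀ i k : Fin 2, |gfun Γ S i k (γ t)| ≤ 4 * C * ‖f t‖ := by
          intro i k
          have b1 := hC i 0 0 _ hmem; have b2 := hC i 1 1 _ hmem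
          have b3 := hC i 0 k _ hmem; have b4 := hC i 1 k _ hmem
          have s0 := hSb 0; have s1 := hSb 1; have sk := hSb k
          have hft : (0:ℝ) ≤ ‖f t‖ := norm_nonneg _
          simp only [gfun]
          have habs : ∀ a b : ℝ, |a - b| ≤ |a| + |b| := fun a b => abs_sub a b
          calc |(Γ i 0 0 (γ t) + Γ i 1 1 (γ t)) * S k (γ t)
                - (Γ i 0 k (γ t) * S 0 (γ t) + Γ i 1 k (γ t) * S 1 (γ t))|
              ≤ |(Γ i 0 0 (γ t) + Γ i 1 1 (γ t)) * S k (γ t)|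
                + |Γ i 0 k (γ t) * S 0 (γ t) + Γ i 1 k (γ t) * S 1 (γ t)| := habs _ _
            _ ≤ 4 * C * ‖f t‖ := by
                have e1 : |(Γ i 0 0 (γ t) + Γ i 1 1 (γ t)) * S k (γ t)|
                    ≤ 2 * C * ‖f t‖ := by
                  rw [abs_mul]
                  have : |Γ i 0 0 (γ t) + Γ i 1 1 (γ t)| ≤ 2 * C := by
                    calc |Γ i 0 0 (γ t) + Γ i 1 1 (γ t)|
                        ≤ |Γ i 0 0 (γ t)| + |Γ i 1 1 (γ t)| := abs_add_le _ _
                      _ ≤ 2 * C := by linarith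
                  nlinarith [abs_nonneg (S k (γ t))]
                have e2 : |Γ i 0 k (γ t) * S 0 (γ t) + Γ i 1 k (γ t) * S 1 (γ t)|
                    ≤ 2 * C * ‖f t‖ := by
                  calc |Γ i 0 k (γ t) * S 0 (γ t) + Γ i 1 k (γ t) * S 1 (γ t)|
                      ≤ |Γ i 0 k (γ t)| * |S 0 (γ t)| + |Γ i 1 k (γ t)| * |S 1 (γ t)| := by
                        refine (abs_add_le _ _).trans ?_
                        rw [abs_mul, abs_mul]
                    _ ≤ 2 * C * ‖f t‖ := by
                        nlinarith [abs_nonneg (S 0 (γ t)), abs_nonneg (S 1 (γ t)),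
                          abs_nonneg (Γ i 0 k (γ t)), abs_nonneg (Γ i 1 k (γ t))]
                linarith
        have hco : ∀ k : Fin 2, |w.1 * gfun Γ S 0 k (γ t) + w.2 * gfun Γ S 1 k (γ t)|
            ≤ K * ‖f t‖ := by
          intro k
          have g0 := hgb 0 k; have g1 := hgb 1 k
          calc |w.1 * gfun Γ S 0 k (γ t) + w.2 * gfun Γ S 1 k (γ t)|
              ≤ |w.1| * |gfun Γ S 0 k (γ t)| + |w.2| * |gfun Γ S 1 k (γ t)| := by
                refine (abs_add_le _ _).trans ?_; rw [abs_mul, abs_mul]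
            _ ≤ K * ‖f t‖ := by
                rw [hK]
                nlinarith [abs_nonneg w.1, abs_nonneg w.2,
                  abs_nonneg (gfun Γ S 0 k (γ t)), abs_nonneg (gfun Γ S 1 k (γ t))]
        rw [add_zero]
        have : ‖f' t‖ = max |w.1 * gfun Γ S 0 0 (γ t) + w.2 * gfun Γ S 1 0 (γ t)|
            |w.1 * gfun Γ S 0 1 (γ t) + w.2 * gfun Γ S 1 1 (γ t)| := by
          simp [hf', Prod.norm_def, Real.norm_eq_abs]
        rw [this]
        exact max_le (hco 0) (hco 1)
      have hcont : ContinuousOn f (Icc (0:ℝ) 1) := fun t ht =>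
        (hfd t ht).continuousAt.continuousWithinAt
      have hstart : ‖f 0‖ ≤ 0 := by
        have : γ (0:ℝ) = q0 := by simp [hγ]
        simp [hf, this, hq00, hq01, Prod.norm_def]
      have := norm_le_gronwallBound_of_norm_deriv_right_le hcont
        (fun t ht => (hfd t ⟨ht.1, le_of_lt ht.2⟩).hasDerivWithinAt) hstart hbound
        1 (by norm_num)
      rw [gronwallBound_ε0_δ0] at this
      have hf1 : f 1 = 0 := by
        have h := le_antisymm this (norm_nonneg _)
        exact norm_eq_zero.1 h
      have hγ1 : γ (1:ℝ) = q' := by simp [hγ, hw]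
      have h0 : S 0 q' = 0 := by
        have := congrArg Prod.fst hf1; simpa [hf, hγ1] using this
      have h1 : S 1 q' = 0 := by
        have := congrArg Prod.snd hf1; simpa [hf, hγ1] using this
      exact ⟨hq'U, h0, h1⟩
    exact Filter.mem_of_superset (Metric.ball_mem_nhds q0 hrpos) hsub
  -- connectedness argument
  set V : Set (ℝ × ℝ) := {x | x ∈ U ∧ (S 0 x ≠ 0 ∨ S 1 x ≠ 0)} with hV
  have hVopen : IsOpen V := by
    rw [isOpen_iff_mem_nhds]
    rintro x ⟨hxU, hx⟩
    rcases hx with hx | hx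
    · have hc : ContinuousAt (S 0) x := ((hS 0).contDiffAt (hU.mem_nhds hxU)).continuousAt
      filter_upwards [hc.eventually_ne hx, hU.mem_nhds hxU] with y hy hyU
      exact ⟨hyU, Or.inl hy⟩
    · have hc : ContinuousAt (S 1) x := ((hS 1).contDiffAt (hU.mem_nhds hxU)).continuousAt
      filter_upwards [hc.eventually_ne hx, hU.mem_nhds hxU] with y hy hyU
      exact ⟨hyU, Or.inr hy⟩
  intro q hq k
  by_contra hk
  have hqV : q ∈ V := ⟨hq, by fin_cases k; exact Or.inl hk; exact Or.inr hk⟩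
  have hUsub : U ⊆ Z ∪ V := by
    intro x hx
    by_cases h0 : S 0 x = 0
    · by_cases h1 : S 1 x = 0
      · exact Or.inl ⟨hx, h0, h1⟩
      · exact Or.inr ⟨hx, Or.inr h1⟩
    · exact Or.inr ⟨hx, Or.inl h0⟩
  have hnon := hconn.isPreconnected Z V hZopen hVopen hUsub
    ⟨p, hp, hp, h00, h10⟩ ⟨q, hq, hqV⟩
  obtain ⟨x, -, ⟨-, hx0, hx1⟩, -, hx⟩ := hnon
  rcases hx with hx | hx
  · exact hx hx0
  · exact hx hx1

/-- at every point of a connected open set,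
`rank(ρ) + dim 𝔓 ≤ 2`, where `𝔓` is the space of parallel abstract torsion tensors
(identified with their restrictions to `U`). -/
theorem rank_ricci_add_dim_parallel_le_two (U : Set (ℝ × ℝ)) (hU : IsOpen U)
    (hconn : IsConnected U)
    (Γ : Fin 2 → Fin 2 → Fin 2 → ℝ × ℝ → ℝ)
    (hΓ : ∀ i j k, ContDiffOn ℝ (⊤ : ℕ∞) (Γ i j k) U) :
    ∀ p ∈ U,
      (Matrix.of fun j k => affRicci Γ j k p).rank
        + Set.finrank ℝ {Sr : Fin 2 → (U → ℝ) |
            ∃ S : Fin 2 → ℝ × ℝ → ℝ,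
              (∀ k, ContDiffOn ℝ (⊤ : ℕ∞) (S k) U) ∧
              (∀ i k, ∀ q ∈ U, absTorCov Γ S i k q = 0) ∧
              Sr = fun k (q : U) => S k (q : ℝ × ℝ)} ≤ 2 := by
  intro p hp
  set M : Matrix (Fin 2) (Fin 2) ℝ := Matrix.of fun j k => affRicci Γ j k p with hM
  set 𝔖 : Set (Fin 2 → (U → ℝ)) := {Sr : Fin 2 → (U → ℝ) |
      ∃ S : Fin 2 → ℝ × ℝ → ℝ,
        (∀ k, ContDiffOn ℝ (⊤ : ℕ∞) (S k) U) ∧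
        (∀ i k, ∀ q ∈ U, absTorCov Γ S i k q = 0) ∧
        Sr = fun k (q : U) => S k (q : ℝ × ℝ)} with h𝔖
  -- the evaluation map at p
  set ev : (Fin 2 → (U → ℝ)) →ₗ[ℝ] (Fin 2 → ℝ) :=
    { toFun := fun Sr k => Sr k ⟨p, hp⟩
      map_add' := fun _ _ => rfl
      map_smul' := fun _ _ => rfl } with hev
  set K : Submodule ℝ (Fin 2 → ℝ) := LinearMap.ker (Matrix.mulVecLin M.transpose) with hK
  -- span of 𝔖 maps into K under ev, injectively
  have hevmem : ∀ Sr ∈ 𝔖, ev Sr ∈ K := by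
    rintro Sr ⟨S, hS, hpar, rfl⟩
    simp only [hK, LinearMap.mem_ker]
    funext l
    have := key_ricci hU hΓ hS hpar hp l
    simp [Matrix.mulVecLin_apply, Matrix.mulVec, Matrix.vecMul, dotProduct,
      Fin.sum_univ_two, Matrix.transpose_apply, hM, hev]
    linarith [this]
  have hinj : ∀ Sr ∈ 𝔖, ev Sr = 0 → Sr = 0 := by
    rintro Sr ⟨S, hS, hpar, rfl⟩ h0
    have h00 : S 0 p = 0 := congrFun h0 0
    have h10 : S 1 p = 0 := congrFun h0 1
    have := parallel_vanish hU hconn hΓ hS hpar hp h00 h10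
    funext k q
    exact this q q.2 k
  -- 𝔖 is a submodule (closed under add/smul/zero)
  have hzero : (0 : Fin 2 → (U → ℝ)) ∈ 𝔖 := by
    refine ⟨fun _ _ => 0, fun k => contDiffOn_const, fun i k q hq => ?_, rfl⟩
    simp [absTorCov, pder, fderiv_const]
  have hadd : ∀ a ∈ 𝔖, ∀ b ∈ 𝔖, a + b ∈ 𝔖 := by
    rintro a ⟨S, hS, hpa, rfl⟩ b ⟨T, hT, hpb, rfl⟩
    refine ⟨fun k x => S k x + T k x, fun k => (hS k).add (hT k), fun i k q hq => ?_, rfl⟩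
    have hdS : DifferentiableAt ℝ (S k) q :=
      ((hS k).contDiffAt (hU.mem_nhds hq)).differentiableAt (by simp)
    have hdT : DifferentiableAt ℝ (T k) q :=
      ((hT k).contDiffAt (hU.mem_nhds hq)).differentiableAt (by simp)
    have ea := hpa i k q hq
    have eb := hpb i k q hq
    have hp : pder i (fun x => S k x + T k x) q = pder i (S k) q + pder i (T k) q := by
      unfold pder; rw [fderiv_fun_add hdS hdT]; simp
    simp only [absTorCov, Fin.sum_univ_two] at ea eb ⊢
    rw [hp]
    linear_combination ea + eb
  have hsmul : ∀ (c : ℝ), ∀ a ∈ 𝔖, c • a ∈ 𝔖 := by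
    rintro c a ⟨S, hS, hpa, rfl⟩
    refine ⟨fun k x => c * S k x, fun k => (contDiffOn_const).mul (hS k),
      fun i k q hq => ?_, rfl⟩
    have ea := hpa i k q hq
    have hp : pder i (fun x => c * S k x) q = c * pder i (S k) q := by
      unfold pder
      rw [fderiv_const_mul (((hS k).contDiffAt (hU.mem_nhds hq)).differentiableAt (by simp))]
      simp
    simp only [absTorCov, Fin.sum_univ_two] at ea ⊢
    rw [hp]
    linear_combination c * ea
  set P : Submodule ℝ (Fin 2 → (U → ℝ)) :=
    { carrier := 𝔖
      add_mem' := fun ha hb => hadd _ ha _ hb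
      zero_mem' := hzero
      smul_mem' := fun c a ha => hsmul c a ha } with hP
  have hfr : Set.finrank ℝ 𝔖 = Module.finrank ℝ P := by
    have hsp : Submodule.span ℝ 𝔖 = P := Submodule.span_eq P
    rw [Set.finrank, hsp]
  -- the restricted/corestricted evaluation map
  set φ : P →ₗ[ℝ] K := LinearMap.codRestrict K (ev.domRestrict P)
    (fun x => hevmem x x.2) with hφ
  have hφinj : Function.Injective φ := by
    rw [← LinearMap.ker_eq_bot, LinearMap.ker_eq_bot']
    intro m hm
    have : ev (m : Fin 2 → (U → ℝ)) = 0 := by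
      have := congrArg (Subtype.val) hm
      exact this
    exact Subtype.ext (hinj _ m.2 this)
  have hle : Module.finrank ℝ P ≤ Module.finrank ℝ K :=
    LinearMap.finrank_le_finrank_of_injective hφinj
  have hrn : Module.finrank ℝ K + M.transpose.rank = 2 := by
    have h2 := LinearMap.finrank_range_add_finrank_ker (Matrix.mulVecLin M.transpose)
    rw [Matrix.rank, hK]
    simp only [Module.finrank_pi, Fintype.card_fin] at h2 ⊢
    omega
  have hrt : M.transpose.rank = M.rank := Matrix.rank_transpose M
  rw [hfr]
  omega
end
end

section
/- Fix u, v ∈ ℝ and consider the connection 𝓜_{u,v} on ℝ² whose only (possibly) nonzero Christoffel symbols are Γ_{11}{}^1 = 1, Γ_{12}{}^1 = 2u, Γ_{22}{}^1 = v. Then: (a) the Ricci tensor satisfies ρ_{22} = v and ρ_{11} = ρ_{12} = ρ_{21} = 0; (b) the Ricci tensor is parallel: ρ_{jk;i} = 0 for all i,j,k; (c) the torsion components are T¹ = u, T² = 0; (d) the torsion is parallel: T^k{}_{;i} = 0 for all i,k. -/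
noncomputable section

open scoped BigOperators

/-- The connection `𝓜_{u,v}` on `ℝ²`: the only (possibly) nonzero Christoffel symbols
are `Γ_{11}{}^1 = 1`, `Γ_{12}{}^1 = 2u`, `Γ_{22}{}^1 = v`. -/
noncomputable def GammaMuv (u v : ℝ) : Fin 2 → Fin 2 → Fin 2 → ℝ × ℝ → ℝ :=
  fun i j k _ =>
    if i = 0 ∧ j = 0 ∧ k = 0 then 1
    else if i = 0 ∧ j = 1 ∧ k = 0 then 2 * u
    else if i = 1 ∧ j = 1 ∧ k = 0 then v
    else 0


lemma pder_const (i : Fin 2) (c : ℝ) (p : ℝ × ℝ) : pder i (fun _ => c) p = 0 := by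
  simp [pder]

lemma GammaMuv_eq (u v : ℝ) (i j k : Fin 2) :
    GammaMuv u v i j k = fun _ =>
      (if i = 0 ∧ j = 0 ∧ k = 0 then 1
       else if i = 0 ∧ j = 1 ∧ k = 0 then 2 * u
       else if i = 1 ∧ j = 1 ∧ k = 0 then v
       else 0) := rfl

lemma affRicci_eq (u v : ℝ) (j k : Fin 2) :
    affRicci (GammaMuv u v) j k = fun _ => if j = 1 ∧ k = 1 then v else 0 := by
  funext p
  fin_cases j <;> fin_cases k <;>
    simp [affRicci, affCurv, GammaMuv_eq, pder_const, Fin.sum_univ_two]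

lemma affTor_eq (u v : ℝ) (k : Fin 2) :
    affTor (GammaMuv u v) k = fun _ => if k = 0 then u else 0 := by
  funext p
  fin_cases k <;> simp [affTor, GammaMuv_eq]

/-- for `𝓜_{u,v}`: (a) `ρ_{22} = v`, all other Ricci components vanish;
(b) the Ricci tensor is parallel; (c) `T¹ = u`, `T² = 0`; (d) the torsion is parallel. -/
theorem Muv_ricci_torsion (u v : ℝ) :
    (∀ p : ℝ × ℝ,
        affRicci (GammaMuv u v) 1 1 p = v ∧
        affRicci (GammaMuv u v) 0 0 p = 0 ∧
        affRicci (GammaMuv u v) 0 1 p = 0 ∧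
        affRicci (GammaMuv u v) 1 0 p = 0) ∧
    (∀ i j k, ∀ p : ℝ × ℝ, affRicciCov (GammaMuv u v) i j k p = 0) ∧
    (∀ p : ℝ × ℝ, affTor (GammaMuv u v) 0 p = u ∧ affTor (GammaMuv u v) 1 p = 0) ∧
    (∀ i k, ∀ p : ℝ × ℝ, affTorCov (GammaMuv u v) i k p = 0) := by
  refine ⟨fun p => ?_, fun i j k p => ?_, fun p => ?_, fun i k p => ?_⟩
  · simp [affRicci_eq]
  · fin_cases i <;> fin_cases j <;> fin_cases k <;>
      simp [affRicciCov, affRicci_eq, GammaMuv_eq, pder_const, Fin.sum_univ_two]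
  · simp [affTor_eq]
  · fin_cases i <;> fin_cases k <;>
      simp [affTorCov, affTor_eq, GammaMuv_eq, pder_const, Fin.sum_univ_two]
end
end

section
/- Fix u, v ∈ ℝ and consider the torsion-free connection ⁰𝓜_{u,v} on ℝ² whose only (possibly) nonzero Christoffel symbols are Γ_{11}{}^1 = 1, Γ_{12}{}^1 = Γ_{21}{}^1 = u, Γ_{22}{}^1 = v. Then the Ricci tensor satisfies ρ_{22} = v − u² and ρ_{11} = ρ_{12} = ρ_{21} = 0, and the Ricci tensor is parallel: ρ_{jk;i} = 0 for all i,j,k. -/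
noncomputable section

open scoped BigOperators

/-- The torsion-free connection `⁰𝓜_{u,v}` on `ℝ²`: the only (possibly) nonzero
Christoffel symbols are `Γ_{11}{}^1 = 1`, `Γ_{12}{}^1 = Γ_{21}{}^1 = u`, `Γ_{22}{}^1 = v`. -/
noncomputable def GammaZeroMuv (u v : ℝ) : Fin 2 → Fin 2 → Fin 2 → ℝ × ℝ → ℝ :=
  fun i j k _ =>
    if i = 0 ∧ j = 0 ∧ k = 0 then 1
    else if i = 0 ∧ j = 1 ∧ k = 0 then u
    else if i = 1 ∧ j = 0 ∧ k = 0 then u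
    else if i = 1 ∧ j = 1 ∧ k = 0 then v
    else 0

lemma pder_gamma (u v : ℝ) (i j k l : Fin 2) (p : ℝ × ℝ) :
    pder i (GammaZeroMuv u v j k l) p = 0 :=
  pder_const i _ p

lemma ricci_val (u v : ℝ) (j k : Fin 2) (p : ℝ × ℝ) :
    affRicci (GammaZeroMuv u v) j k p = if j = 1 ∧ k = 1 then v - u ^ 2 else 0 := by
  fin_cases j <;> fin_cases k <;>
    simp [affRicci, affCurv, pder_gamma, GammaZeroMuv, Fin.sum_univ_two] <;> ring

lemma ricci_fun (u v : ℝ) (j k : Fin 2) :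
    affRicci (GammaZeroMuv u v) j k = fun _ => if j = 1 ∧ k = 1 then v - u ^ 2 else 0 := by
  funext p; exact ricci_val u v j k p

/-- for `⁰𝓜_{u,v}`: `ρ_{22} = v − u²`, all other Ricci components vanish,
and the Ricci tensor is parallel. -/
theorem zeroMuv_ricci (u v : ℝ) :
    (∀ p : ℝ × ℝ,
        affRicci (GammaZeroMuv u v) 1 1 p = v - u ^ 2 ∧
        affRicci (GammaZeroMuv u v) 0 0 p = 0 ∧
        affRicci (GammaZeroMuv u v) 0 1 p = 0 ∧
        affRicci (GammaZeroMuv u v) 1 0 p = 0) ∧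
    (∀ i j k, ∀ p : ℝ × ℝ, affRicciCov (GammaZeroMuv u v) i j k p = 0) := by
  constructor
  · intro p
    refine ⟨?_, ?_, ?_, ?_⟩ <;> simp [ricci_val]
  · intro i j k p
    rw [affRicciCov, ricci_fun u v j k, pder_const]
    fin_cases i <;> fin_cases j <;> fin_cases k <;>
      simp [ricci_val, GammaZeroMuv, Fin.sum_univ_two] <;> ring
end
end

section
/- Fix ξ, α ∈ ℝ and ε ∈ {+1, −1}, and on U = {(x¹,x²) ∈ ℝ² : x¹ > 0} consider the Type ℬ connection whose only nonzero Christoffel symbols are Γ_{11}{}^1 = ξ/x¹, Γ_{12}{}^1 = 2α/x¹, Γ_{12}{}^2 = −1/x¹, Γ_{22}{}^1 = ε/x¹. Then: (a) the Ricci tensor is ρ_{22} = εξ/(x¹)² and ρ_{11} = ρ_{12} = ρ_{21} = 0; (b) the Ricci tensor is parallel: ρ_{jk;i} = 0 on U for all i,j,k; (c) the torsion components are T¹ = α/x¹, T² = −1/(2x¹); (d) the covariant derivative of the torsion satisfies T¹{}_{;1} = −α/(x¹)², T²{}_{;1} = (ξ+1)/(2(x¹)²), T¹{}_{;2} = −ε/(2(x¹)²),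 T²{}_{;2} = 0; in particular the torsion is not parallel. -/
noncomputable section

open scoped BigOperators

/-- The Type ℬ connection on `{x¹ > 0}` with only nonzero Christoffel symbols
`Γ_{11}{}^1 = ξ/x¹`, `Γ_{12}{}^1 = 2α/x¹`, `Γ_{12}{}^2 = −1/x¹`, `Γ_{22}{}^1 = ε/x¹`. -/
noncomputable def GammaB7 (ξ α ε : ℝ) : Fin 2 → Fin 2 → Fin 2 → ℝ × ℝ → ℝ :=
  fun i j k p =>
    if i = 0 ∧ j = 0 ∧ k = 0 then ξ / p.1
    else if i = 0 ∧ j = 1 ∧ k = 0 then 2 * α / p.1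
    else if i = 0 ∧ j = 1 ∧ k = 1 then -1 / p.1
    else if i = 1 ∧ j = 1 ∧ k = 0 then ε / p.1
    else 0

/-!
A Type ℬ connection `Γ_{ij}{}^k = C_{ij}{}^k / x¹` with constant `C` is invariant under the
dilations `x ↦ λx`, so each component of a tensor built from it is a constant times a power of
`1/x¹`: `(x¹)⁻²` for curvature, Ricci tensor and `∇T`, `(x¹)⁻³` for `∇ρ`, `(x¹)⁻¹` for the
torsion, with constants that are polynomials in `C`. The theorem thus reduces to evaluating
these polynomials at the four nonzero coefficients of the connection.
-/

open Filter Topology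

lemma hasFDerivAt_div_fst_pow (c : ℝ) (n : ℕ) {p : ℝ × ℝ} (hp : p.1 ≠ 0) :
    HasFDerivAt (fun q : ℝ × ℝ => c / q.1 ^ n)
      ((-n * c / p.1 ^ (n + 1)) • ContinuousLinearMap.fst ℝ ℝ ℝ) p := by
  have h := ((hasDerivAt_pow n p.1).inv (pow_ne_zero n hp)).const_mul c
  simp only [← div_eq_mul_inv, Pi.inv_apply] at h
  refine (h.congr_deriv ?_).comp_hasFDerivAt p hasFDerivAt_fst
  rcases n with _ | n
  · simp
  · rw [Nat.add_sub_cancel]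
    field_simp
    ring

lemma pder_div_fst_pow (i : Fin 2) (c : ℝ) (n : ℕ) {p : ℝ × ℝ} (hp : p.1 ≠ 0) :
    pder i (fun q => c / q.1 ^ n) p = -n * c * (coordVec i).1 / p.1 ^ (n + 1) := by
  rw [pder, (hasFDerivAt_div_fst_pow c n hp).fderiv]
  simp only [FunLike.coe_smul, Pi.smul_apply, ContinuousLinearMap.coe_fst', smul_eq_mul]
  ring

lemma pder_div_fst (i : Fin 2) (c : ℝ) {p : ℝ × ℝ} (hp : p.1 ≠ 0) :
    pder i (fun q => c / q.1) p = -c * (coordVec i).1 / p.1 ^ 2 := by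
  simpa using pder_div_fst_pow i c 1 hp

lemma Filter.EventuallyEq.pder_eq {f g : ℝ × ℝ → ℝ} {p : ℝ × ℝ} (h : f =ᶠ[𝓝 p] g)
    (i : Fin 2) : pder i f p = pder i g p := by
  rw [pder, pder, h.fderiv_eq]

section TypeB

variable (C : Fin 2 → Fin 2 → Fin 2 → ℝ)

def typeB : Fin 2 → Fin 2 → Fin 2 → ℝ × ℝ → ℝ := fun i j k p => C i j k / p.1

-- `(coordVec i).1` is the Kronecker delta `δ_i^1`, from `∂_i (1/x¹) = -δ_i^1/(x¹)²`.
def typeBCurv (i j k l : Fin 2) : ℝ :=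
  (coordVec j).1 * C i k l - (coordVec i).1 * C j k l +
    ∑ m : Fin 2, (C i m l * C j k m - C j m l * C i k m)

def typeBRicci (j k : Fin 2) : ℝ := typeBCurv C 0 j k 0 + typeBCurv C 1 j k 1

def typeBRicciCov (i j k : Fin 2) : ℝ :=
  -2 * (coordVec i).1 * typeBRicci C j k -
    ∑ m : Fin 2, (C i j m * typeBRicci C m k + C i k m * typeBRicci C j m)

def typeBTor (k : Fin 2) : ℝ := (C 0 1 k - C 1 0 k) / 2

def typeBTorCov (i k : Fin 2) : ℝ :=
  -(coordVec i).1 * typeBTor C k + ∑ m : Fin 2, C i m k * typeBTor C m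
    - (C i 0 0 + C i 1 1) * typeBTor C k

lemma pder_typeB (i j k l : Fin 2) {p : ℝ × ℝ} (hp : p.1 ≠ 0) :
    pder i (typeB C j k l) p = -C j k l * (coordVec i).1 / p.1 ^ 2 :=
  pder_div_fst i (C j k l) hp

lemma affCurv_typeB (i j k l : Fin 2) {p : ℝ × ℝ} (hp : p.1 ≠ 0) :
    affCurv (typeB C) i j k l p = typeBCurv C i j k l / p.1 ^ 2 := by
  simp only [affCurv, pder_typeB C _ _ _ _ hp, typeBCurv, typeB, Fin.sum_univ_two]
  field_simp
  ring

lemma affRicci_typeB (j k : Fin 2) {p : ℝ × ℝ} (hp : p.1 ≠ 0) :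
    affRicci (typeB C) j k p = typeBRicci C j k / p.1 ^ 2 := by
  rw [affRicci, affCurv_typeB C _ _ _ _ hp, affCurv_typeB C _ _ _ _ hp, typeBRicci, add_div]

lemma affRicciCov_typeB (i j k : Fin 2) {p : ℝ × ℝ} (hp : p.1 ≠ 0) :
    affRicciCov (typeB C) i j k p = typeBRicciCov C i j k / p.1 ^ 3 := by
  have hρ : affRicci (typeB C) j k =ᶠ[𝓝 p] fun q => typeBRicci C j k / q.1 ^ 2 :=
    ((continuous_fst.tendsto p).eventually_ne hp).mono fun _ hq => affRicci_typeB C j k hq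
  simp only [affRicciCov, hρ.pder_eq i, pder_div_fst_pow _ _ _ hp,
    affRicci_typeB C _ _ hp, typeB, typeBRicciCov, Fin.sum_univ_two]
  field_simp
  ring

lemma affTor_typeB (k : Fin 2) : affTor (typeB C) k = fun p => typeBTor C k / p.1 := by
  ext p
  simp only [affTor, typeB, typeBTor]
  ring

lemma affTorCov_typeB (i k : Fin 2) {p : ℝ × ℝ} (hp : p.1 ≠ 0) :
    affTorCov (typeB C) i k p = typeBTorCov C i k / p.1 ^ 2 := by
  simp only [affTorCov, affTor_typeB, pder_div_fst _ _ hp, typeB, typeBTorCov,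
    Fin.sum_univ_two]
  field_simp

end TypeB

section B7

variable (ξ α ε : ℝ)

def b7Coeff : Fin 2 → Fin 2 → Fin 2 → ℝ := fun i j k =>
  if i = 0 ∧ j = 0 ∧ k = 0 then ξ
  else if i = 0 ∧ j = 1 ∧ k = 0 then 2 * α
  else if i = 0 ∧ j = 1 ∧ k = 1 then -1
  else if i = 1 ∧ j = 1 ∧ k = 0 then ε
  else 0

lemma GammaB7_eq_typeB : GammaB7 ξ α ε = typeB (b7Coeff ξ α ε) := by
  ext i j k p
  simp only [GammaB7, typeB, b7Coeff]
  split_ifs <;> simp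

lemma typeBRicci_b7Coeff (j k : Fin 2) :
    typeBRicci (b7Coeff ξ α ε) j k = if j = 1 ∧ k = 1 then ε * ξ else 0 := by
  fin_cases j <;> fin_cases k <;>
    simp [typeBRicci, typeBCurv, b7Coeff, coordVec, Fin.sum_univ_two, mul_comm]

lemma typeBRicciCov_b7Coeff (i j k : Fin 2) : typeBRicciCov (b7Coeff ξ α ε) i j k = 0 := by
  simp only [typeBRicciCov, typeBRicci_b7Coeff, Fin.sum_univ_two]
  fin_cases i <;> fin_cases j <;> fin_cases k <;> simp [b7Coeff, coordVec, two_mul]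

lemma typeBTor_b7Coeff :
    typeBTor (b7Coeff ξ α ε) 0 = α ∧ typeBTor (b7Coeff ξ α ε) 1 = -1 / 2 := by
  simp [typeBTor, b7Coeff]

lemma typeBTorCov_b7Coeff :
    typeBTorCov (b7Coeff ξ α ε) 0 0 = -α ∧ typeBTorCov (b7Coeff ξ α ε) 0 1 = (ξ + 1) / 2 ∧
      typeBTorCov (b7Coeff ξ α ε) 1 0 = -ε / 2 ∧ typeBTorCov (b7Coeff ξ α ε) 1 1 = 0 := by
  norm_num [typeBTorCov, typeBTor_b7Coeff, Fin.sum_univ_two, b7Coeff, coordVec]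
  refine ⟨?_, ?_, ?_⟩ <;> ring

end B7

/-- for the Type ℬ structure above (with `ε = ±1`):
(a) `ρ_{22} = εξ/(x¹)²` and all other Ricci components vanish; (b) the Ricci tensor is
parallel; (c) `T¹ = α/x¹`, `T² = −1/(2x¹)`; (d) `T¹{}_{;1} = −α/(x¹)²`,
`T²{}_{;1} = (ξ+1)/(2(x¹)²)`, `T¹{}_{;2} = −ε/(2(x¹)²)`, `T²{}_{;2} = 0`;
in particular the torsion is not parallel. -/
theorem typeB7_symmetric_nonparallel_torsion (ξ α ε : ℝ) (hε : ε = 1 ∨ ε = -1) :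
    (∀ p ∈ {q : ℝ × ℝ | 0 < q.1},
        affRicci (GammaB7 ξ α ε) 1 1 p = ε * ξ / p.1 ^ 2 ∧
        affRicci (GammaB7 ξ α ε) 0 0 p = 0 ∧
        affRicci (GammaB7 ξ α ε) 0 1 p = 0 ∧
        affRicci (GammaB7 ξ α ε) 1 0 p = 0) ∧
    (∀ i j k, ∀ p ∈ {q : ℝ × ℝ | 0 < q.1}, affRicciCov (GammaB7 ξ α ε) i j k p = 0) ∧
    (∀ p ∈ {q : ℝ × ℝ | 0 < q.1},
        affTor (GammaB7 ξ α ε) 0 p = α / p.1 ∧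
        affTor (GammaB7 ξ α ε) 1 p = -1 / (2 * p.1)) ∧
    (∀ p ∈ {q : ℝ × ℝ | 0 < q.1},
        affTorCov (GammaB7 ξ α ε) 0 0 p = -α / p.1 ^ 2 ∧
        affTorCov (GammaB7 ξ α ε) 0 1 p = (ξ + 1) / (2 * p.1 ^ 2) ∧
        affTorCov (GammaB7 ξ α ε) 1 0 p = -ε / (2 * p.1 ^ 2) ∧
        affTorCov (GammaB7 ξ α ε) 1 1 p = 0) ∧
    (∃ i k, ∃ p ∈ {q : ℝ × ℝ | 0 < q.1}, affTorCov (GammaB7 ξ α ε) i k p ≠ 0) := by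
  rw [GammaB7_eq_typeB]
  obtain ⟨hT0, hT1⟩ := typeBTor_b7Coeff ξ α ε
  obtain ⟨hD00, hD01, hD10, hD11⟩ := typeBTorCov_b7Coeff ξ α ε
  have torCov : ∀ p ∈ {q : ℝ × ℝ | 0 < q.1},
      affTorCov (typeB (b7Coeff ξ α ε)) 0 0 p = -α / p.1 ^ 2 ∧
      affTorCov (typeB (b7Coeff ξ α ε)) 0 1 p = (ξ + 1) / (2 * p.1 ^ 2) ∧
      affTorCov (typeB (b7Coeff ξ α ε)) 1 0 p = -ε / (2 * p.1 ^ 2) ∧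
      affTorCov (typeB (b7Coeff ξ α ε)) 1 1 p = 0 := fun p (hp : 0 < p.1) => by
    simp only [affTorCov_typeB _ _ _ hp.ne', hD00, hD01, hD10, hD11, div_div, zero_div, and_self]
  have hε0 : ε ≠ 0 := by rcases hε with rfl | rfl <;> norm_num
  refine ⟨fun p (hp : 0 < p.1) => ?_, fun i j k p (hp : 0 < p.1) => ?_,
    fun p _ => ?_, torCov, ⟨1, 0, (1, 0), zero_lt_one (α := ℝ), ?_⟩⟩
  · simp [affRicci_typeB _ _ _ hp.ne', typeBRicci_b7Coeff]
  · rw [affRicciCov_typeB _ _ _ _ hp.ne', typeBRicciCov_b7Coeff, zero_div]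
  · simp only [affTor_typeB, hT0, hT1, div_div, and_self]
  · simpa [(torCov (1, 0) (zero_lt_one (α := ℝ))).2.2.1] using hε0
end
end
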